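/- If A ⊆ 𝒞 equals 𝒞 ∩ ⋃_n ([v_n] ∩ A_{𝒞,h_n}) for computable sequences of finite sequences v_n and computable orders h_n, then A is semi-decidable from 𝒞-indices: there is a partial computable function that, given i, halts iff f_i ∈ A. -/

import Mathlib

/-- `f` extends the finite sequence `v`. -/
def Extends (f : ℕ → ℕ) (v : List ℕ) : Prop := ∀ j, ∀ _h : j < v.length, f j = v.getD j 0

/-- prefix `f↾n = (f 0, …, f (n-1))`. -/
def pref (f : ℕ → ℕ) (n : ℕ) : List ℕ := (List.range n).map f

/-- `K_𝒞` of a finite sequence, where `𝒞 = {F i : i ∈ ℕ}`. -/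
noncomputable def KCv (F : ℕ → ℕ → ℕ) (v : List ℕ) : ℕ∞ :=
  sInf ((fun i : ℕ => (i : ℕ∞)) '' {i | Extends (F i) v})

/-- `K_𝒞` of a function. -/
noncomputable def KCf (F : ℕ → ℕ → ℕ) (f : ℕ → ℕ) : ℕ∞ :=
  sInf ((fun i : ℕ => (i : ℕ∞)) '' {i | F i = f})

/-!
Given `i`, search over `n` for a witness that `F i ∈ [v n] ∩ A_{𝒞,h n}`. Extension of `v n` is a
finite check. For the complexity bound, `F i` itself extends each of its prefixes, so
`K_𝒞(F i ↾ q) ≤ i`, and by monotonicity the bound `h n q` is automatic once `q ≥ m n i`;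
only the finitely many `q < m n i` remain, and each `K_𝒞(u) ≤ c` is decided by trying the
indices `j ≤ c` against the total functions `F j`.
-/

namespace ComputablePred

variable {α : Type*} [Primcodable α]

theorem comp {β : Type*} [Primcodable β] {p : β → Prop} (hp : ComputablePred p) {f : α → β}
    (hf : Computable f) : ComputablePred fun a => p (f a) := by
  classical
  exact Computable.computablePred <| (hp.decide.comp hf).of_eq fun a => by simp

theorem eq {β : Type*} [Primcodable β] [DecidableEq β] {f g : α → β} (hf : Computable f)
    (hg : Computable g) : ComputablePred fun a => f a = g a :=
  (Primrec.eq.decide.to_comp.comp hf hg).computablePred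

theorem and {p q : α → Prop} (hp : ComputablePred p) (hq : ComputablePred q) :
    ComputablePred fun a => p a ∧ q a := by
  classical
  exact Computable.computablePred <|
    (Primrec.and.to_comp.comp hp.decide hq.decide).of_eq fun a => (Bool.decide_and _ _).symm

theorem forall_lt {p : α → ℕ → Prop} (hp : ComputablePred fun x : α × ℕ => p x.1 x.2)
    {b : α → ℕ} (hb : Computable b) : ComputablePred fun a => ∀ k < b a, p a k := by
  classical
  have hrec : Computable fun a =>
      Nat.rec (motive := fun _ => Bool) true (fun k acc => acc && decide (p a k)) (b a) :=
    Computable.nat_rec hb (Computable.const true)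
      (Primrec.and.to_comp.comp (Computable.snd.comp Computable.snd)
        (hp.decide.comp (Computable.fst.pair (Computable.fst.comp Computable.snd)))).to₂
  refine Computable.computablePred (hrec.of_eq fun a => ?_)
  induction b a with
  | zero => simp
  | succ n ih => simp only [ih, Nat.forall_lt_succ_right, Bool.decide_and]

theorem exists_lt {p : α → ℕ → Prop} (hp : ComputablePred fun x : α × ℕ => p x.1 x.2)
    {b : α → ℕ} (hb : Computable b) : ComputablePred fun a => ∃ k < b a, p a k :=
  (forall_lt (p := fun a k => ¬p a k) hp.not hb).not.of_eq fun a => by simp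

theorem rePred_exists {p : α → ℕ → Prop} (hp : ComputablePred fun x : α × ℕ => p x.1 x.2) :
    REPred fun a => ∃ n, p a n := by
  classical
  have hsearch : Partrec fun a => Nat.rfind fun n => Part.some (decide (p a n)) :=
    Partrec.rfind hp.decide.partrec.to₂
  exact hsearch.dom_re.of_eq fun a => Nat.rfind_dom.trans (by simp)

end ComputablePred

theorem extends_pref (f : ℕ → ℕ) (q : ℕ) : Extends f (pref f q) := by
  intro j hj
  rw [List.getD_eq_getElem _ _ hj]
  simp [pref]

theorem pref_succ (f : ℕ → ℕ) (q : ℕ) : pref f (q + 1) = pref f q ++ [f q] := by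
  simp [pref, List.range_succ]

/-- The set `A_{𝒞,h}`. -/
def boundedKC (F : ℕ → ℕ → ℕ) (h : ℕ → ℕ) : Set (ℕ → ℕ) :=
  {g | ∀ q, KCv F (pref g q) ≤ h q}

section

variable {F : ℕ → ℕ → ℕ}

theorem KCv_le_iff {u : List ℕ} {c : ℕ} : KCv F u ≤ c ↔ ∃ j ≤ c, Extends (F j) u := by
  constructor
  · intro hle
    have hne : ((fun i : ℕ => (i : ℕ∞)) '' {i | Extends (F i) u}).Nonempty := by
      by_contra hempty
      rw [Set.not_nonempty_iff_eq_empty] at hempty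
      simp [KCv, hempty] at hle
    obtain ⟨j, hj, hjeq⟩ := csInf_mem hne
    have hjc : (j : ℕ∞) ≤ c := hjeq.trans_le hle
    exact ⟨j, by exact_mod_cast hjc, hj⟩
  · rintro ⟨j, hjc, hj⟩
    calc KCv F u ≤ j := sInf_le ⟨j, hj, rfl⟩
      _ ≤ c := by exact_mod_cast hjc

theorem KCv_pref_le_index (i q : ℕ) : KCv F (pref (F i) q) ≤ i :=
  KCv_le_iff.2 ⟨i, le_rfl, extends_pref (F i) q⟩

theorem mem_boundedKC_iff_forall_lt {h : ℕ → ℕ} (hmono : Monotone h) {i q₀ : ℕ}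
    (hq₀ : i ≤ h q₀) : F i ∈ boundedKC F h ↔ ∀ q < q₀, KCv F (pref (F i) q) ≤ h q := by
  refine ⟨fun hF q _ => hF q, fun hlt q => ?_⟩
  rcases lt_or_ge q q₀ with hq | hq
  · exact hlt q hq
  · exact (KCv_pref_le_index i q).trans (by exact_mod_cast hq₀.trans (hmono hq))

theorem computablePred_extends (hF : Computable fun x : ℕ × ℕ => F x.1 x.2) : ComputablePred fun x : ℕ × List ℕ => Extends (F x.1) x.2 :=
  ComputablePred.forall_lt (p := fun x j => F x.1 j = x.2.getD j 0)
    (ComputablePred.eq (hF.comp ((Computable.fst.comp Computable.fst).pair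
      Computable.snd)) ((Primrec.list_getD 0).to_comp.comp (Computable.snd.comp Computable.fst)
        Computable.snd))
    (Computable.list_length.comp Computable.snd)

theorem computable_pref (hF : Computable fun x : ℕ × ℕ => F x.1 x.2) : Computable fun x : ℕ × ℕ => pref (F x.1) x.2 := by
  have hrec : Computable fun x : ℕ × ℕ =>
      Nat.rec (motive := fun _ => List ℕ) [] (fun q l => l ++ [F x.1 q]) x.2 :=
    Computable.nat_rec Computable.snd (Computable.const [])
      (Computable.list_concat.comp (Computable.snd.comp Computable.snd)
        (hF.comp ((Computable.fst.comp Computable.fst).pair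
          (Computable.fst.comp Computable.snd)))).to₂
  refine hrec.of_eq fun x => ?_
  induction x.2 with
  | zero => rfl
  | succ q ih => simp only [ih, pref_succ]

theorem computablePred_KCv_le (hF : Computable fun x : ℕ × ℕ => F x.1 x.2) : ComputablePred fun x : List ℕ × ℕ => KCv F x.1 ≤ x.2 :=
  (ComputablePred.exists_lt (p := fun x j => Extends (F j) x.1)
    ((computablePred_extends hF).comp (Computable.snd.pair (Computable.fst.comp Computable.fst)))
    (Computable.succ.comp Computable.snd)).of_eq fun x => by
      simp only [KCv_le_iff, Nat.lt_succ_iff]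

theorem computablePred_mem_boundedKC (hF : Computable fun x : ℕ × ℕ => F x.1 x.2)
    {h : ℕ → ℕ → ℕ} (hh : Computable₂ h)
    (hmono : ∀ n, Monotone (h n)) {m : ℕ → ℕ → ℕ} (hm : Computable₂ m)
    (hmod : ∀ n k, k ≤ h n (m n k)) :
    ComputablePred fun x : ℕ × ℕ => F x.1 ∈ boundedKC F (h x.2) :=
  (ComputablePred.forall_lt (p := fun x q => KCv F (pref (F x.1) q) ≤ h x.2 q)
    ((computablePred_KCv_le hF).comp ((computable_pref hF).comp
      ((Computable.fst.comp Computable.fst).pair Computable.snd) |>.pair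
      (hh.comp (Computable.snd.comp Computable.fst) Computable.snd)))
    (hm.comp Computable.snd Computable.fst)).of_eq fun x =>
      (mem_boundedKC_iff_forall_lt (hmono x.2) (hmod x.2 x.1)).symm

end

theorem stmt19_general (F : ℕ → ℕ → ℕ) (hF : Computable fun q : ℕ × ℕ => F q.1 q.2)
    (v : ℕ → List ℕ) (hv : Computable v)
    (h : ℕ → ℕ → ℕ) (hh : Computable₂ h) (hmono : ∀ n, Monotone (h n))
    (m : ℕ → ℕ → ℕ) (hm : Computable₂ m) (hmod : ∀ n k, k ≤ h n (m n k))
    (A : Set (ℕ → ℕ))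
    (hA : ∀ f : ℕ → ℕ, f ∈ A ↔ ((∃ i, F i = f) ∧
      ∃ n, Extends f (v n) ∧ ∀ q, KCv F (pref f q) ≤ (h n q : ℕ∞))) :
    ∃ φ : ℕ →. Unit, Partrec φ ∧ ∀ i, (φ i).Dom ↔ F i ∈ A := by
  have hdec : ComputablePred fun x : ℕ × ℕ =>
      Extends (F x.1) (v x.2) ∧ F x.1 ∈ boundedKC F (h x.2) :=
    ((computablePred_extends hF).comp (Computable.fst.pair (hv.comp Computable.snd))).and
      (computablePred_mem_boundedKC hF hh hmono hm hmod)
  have hre : REPred fun i => ∃ n, Extends (F i) (v n) ∧ F i ∈ boundedKC F (h n) :=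
    ComputablePred.rePred_exists (p := fun i n => Extends (F i) (v n) ∧ F i ∈ boundedKC F (h n))
      hdec
  exact ⟨_, hre, fun i => by simp [Part.assert, hA, boundedKC]⟩

/-- if `A = 𝒞 ∩ ⋃_n ([v_n] ∩ A_{𝒞,h_n})` effectively, then `A` is
semi-decidable from `𝒞`-indices. -/
theorem stmt19 (F : ℕ → ℕ → ℕ) (hF : Computable fun q : ℕ × ℕ => F q.1 q.2)
    (b : List ℕ → ℕ) (hb : Computable b) (hbw : ∀ u, Extends (F (b u)) u)
    (v : ℕ → List ℕ) (hv : Computable v)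
    (h : ℕ → ℕ → ℕ) (hh : Computable₂ h) (hmono : ∀ n, Monotone (h n))
    (m : ℕ → ℕ → ℕ) (hm : Computable₂ m) (hmod : ∀ n k, k ≤ h n (m n k))
    (A : Set (ℕ → ℕ))
    (hA : ∀ f : ℕ → ℕ, f ∈ A ↔ ((∃ i, F i = f) ∧
      ∃ n, Extends f (v n) ∧ ∀ q, KCv F (pref f q) ≤ (h n q : ℕ∞))) :
    ∃ φ : ℕ →. Unit, Partrec φ ∧ ∀ i, (φ i).Dom ↔ F i ∈ A :=
  stmt19_general F hF v hv h hh hmono m hm hmod A hA
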